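/- Let G = (V, E, w, μ) be a submodular hypergraph and p ≥ 1. For a nonconstant vector x ∈ ℝ^N define c(x) = inf over θ ∈ [min_v x_v, max_v x_v) of c(Θ(x, θ)), where Θ(x, θ) = {v : x_v > θ}. If x satisfies ‖x‖_{ℓp,μ}^p = Z_{p,μ}(x), i.e., c = 0 minimizes c ↦ ‖x − c·𝟙‖_{ℓp,μ}^p, then c(x) ≤ p · τ^{(p−1)/p} · 𝓡_p(x)^{1/p}, where τ = max_v d_v/μ_v and d_v = Σ_{e∈E : v∈e} θ_e. -/

import Mathlib

/-!
Sweep-cut argument with the weight `p |θ - γ|^(p-1)` centred at a weighted median `γ = x_u`.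
For each vertex `v`, `|x_v - γ|^p` is the integral of that weight over the thresholds `θ` for which
`v` lies on the side of the cut `Θ(x, θ)` not containing `u`; summing, `∑_v μ_v |x_v - γ|^p` is the
integral of the weight against the volume of that side, which the median property bounds by
`min(vol Θ, vol Θᶜ)`. Hence `c(x) ∑_v μ_v |x_v - γ|^p ≤ ∫ vol(∂Θ(x, θ)) p |θ - γ|^(p-1) dθ`.
A hyperedge `e` is cut only for thresholds with `|θ - γ| ≤ m_e := (∑_{v ∈ e} |x_v - γ|^p)^(1/p)`, so
its contribution is at most `p θ_e f_e(x) m_e^(p-1)`. Hölder's inequality and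
`∑_e θ_e m_e^p = ∑_v d_v |x_v - γ|^p ≤ τ ∑_v μ_v |x_v - γ|^p` conclude, because
`Z_{p,μ}(x) ≤ ∑_v μ_v |x_v - γ|^p`.
-/

open scoped BigOperators
open Finset

noncomputable section

/-- A set function on the ground set `Fin N` is submodular:
`F(S ∪ T) + F(S ∩ T) ≤ F(S) + F(T)` for all `S, T`. -/
def Submodular {N : ℕ} (F : Finset (Fin N) → ℝ) : Prop :=
  ∀ S T : Finset (Fin N), F (S ∪ T) + F (S ∩ T) ≤ F S + F T

/-- The Lovász extension of a set function, written in its (tie-breaking independent)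
level-set integral form, which agrees with the usual sorted-sum definition
`f(x) = Σ_{j=1}^{N-1} F({i_1,…,i_j})(x_{i_j} − x_{i_{j+1}})` for a nonincreasing
ordering `x_{i_1} ≥ … ≥ x_{i_N}`. -/
def lovasz {N : ℕ} (F : Finset (Fin N) → ℝ) (x : Fin N → ℝ) : ℝ :=
  ∫ t in (⨅ v, x v)..(⨆ v, x v), F (Finset.univ.filter fun v => t < x v)

/-- The inner product `⟨y, x⟩ = Σ_v y_v x_v`. -/
def dotp {N : ℕ} (y x : Fin N → ℝ) : ℝ := ∑ v, y v * x v

/-- The set of subgradients of `f : ℝ^N → ℝ` at `x`. -/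
def subgradients {N : ℕ} (f : (Fin N → ℝ) → ℝ) (x : Fin N → ℝ) : Set (Fin N → ℝ) :=
  {y | ∀ x', dotp y (x' - x) ≤ f x' - f x}

/-- The base polytope of a set function: `y(S) ≤ F(S)` for all `S ⊆ V` and `y(V) = 0`. -/
def basePolytope {N : ℕ} (F : Finset (Fin N) → ℝ) : Set (Fin N → ℝ) :=
  {y | (∀ S : Finset (Fin N), ∑ v ∈ S, y v ≤ F S) ∧ ∑ v, y v = 0}

/-- The sign function (`sgn 0 = 0`). -/
def sgn (a : ℝ) : ℝ := if 0 < a then 1 else if a < 0 then -1 else 0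

/-- A vector is nonconstant. -/
def Nonconstant {N : ℕ} (x : Fin N → ℝ) : Prop := ∃ u v, x u ≠ x v

/-- Restriction of a vector to a subset of vertices (zero outside that subset). -/
def restrictVec {N : ℕ} (x : Fin N → ℝ) (C : Finset (Fin N)) : Fin N → ℝ :=
  fun v => if v ∈ C then x v else 0

/-- Euclidean norm on `ℝ^N`. -/
def l2norm {N : ℕ} (z : Fin N → ℝ) : ℝ := Real.sqrt (∑ v, z v ^ 2)

/-- Supremum norm on `ℝ^N`. -/
def linfNorm {N : ℕ} (z : Fin N → ℝ) : ℝ := ⨆ v, |z v|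

/-- A submodular hypergraph `G = (V, E, w, μ)` on `V = Fin N`: hyperedges `E`,
positive vertex weights `μ`, and for each hyperedge `e ∈ E` a scalar `θ_e > 0`
together with a normalized symmetric submodular weight `w_e : 2^e → [0,1]`
(extended to all of `2^V` by `w_e(S) = w_e(S ∩ e)`). -/
structure SubmodularHypergraph (N : ℕ) where
  E : Finset (Finset (Fin N))
  μ : Fin N → ℝ
  μ_pos : ∀ v, 0 < μ v
  θ : Finset (Fin N) → ℝ
  θ_pos : ∀ e ∈ E, 0 < θ e
  w : Finset (Fin N) → Finset (Fin N) → ℝ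
  w_inter : ∀ e ∈ E, ∀ S, w e S = w e (S ∩ e)
  w_submodular : ∀ e ∈ E, Submodular (w e)
  w_nonneg : ∀ e ∈ E, ∀ S, 0 ≤ w e S
  w_le_one : ∀ e ∈ E, ∀ S, w e S ≤ 1
  w_empty : ∀ e ∈ E, w e ∅ = 0
  w_normalized : ∀ e ∈ E, ∃ S ⊆ e, w e S = 1
  w_symm : ∀ e ∈ E, ∀ S ⊆ e, w e S = w e (e \ S)

namespace SubmodularHypergraph

variable {N : ℕ} (G : SubmodularHypergraph N)

/-- `vol(S) = Σ_{v ∈ S} μ_v`. -/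
def vol (S : Finset (Fin N)) : ℝ := ∑ v ∈ S, G.μ v

/-- `vol(∂S) = Σ_{e ∈ E} θ_e w_e(S)`. -/
def volB (S : Finset (Fin N)) : ℝ := ∑ e ∈ G.E, G.θ e * G.w e S

/-- The Lovász extension `f_e` of the hyperedge weight `w_e`. -/
def fe (e : Finset (Fin N)) (x : Fin N → ℝ) : ℝ := lovasz (G.w e) x

/-- `Q_p(x) = Σ_{e ∈ E} θ_e f_e(x)^p`. -/
def Q (p : ℝ) (x : Fin N → ℝ) : ℝ := ∑ e ∈ G.E, G.θ e * G.fe e x ^ p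

/-- `‖x‖_{ℓp,μ}^p = Σ_v μ_v |x_v|^p`. -/
def normLpPow (p : ℝ) (x : Fin N → ℝ) : ℝ := ∑ v, G.μ v * |x v| ^ p

/-- `G` is connected: `vol(∂S) > 0` for all nonempty proper `S ⊂ V`. -/
def Connected : Prop :=
  ∀ S : Finset (Fin N), S.Nonempty → S ≠ Finset.univ → 0 < G.volB S

/-- Vertices `u, v` are connected in `G`: every `S` with `u ∈ S`, `v ∉ S` has
`vol(∂S) > 0`. -/
def VertConnected (u v : Fin N) : Prop :=
  ∀ S : Finset (Fin N), u ∈ S → v ∉ S → 0 < G.volB S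

/-- The conductance `c(S) = vol(∂S) / min{vol(S), vol(V∖S)}`. -/
def conductance (S : Finset (Fin N)) : ℝ := G.volB S / min (G.vol S) (G.vol Sᶜ)

/-- The degree `d_v = Σ_{e ∈ E : v ∈ e} θ_e`. -/
def degree (v : Fin N) : ℝ := ∑ e ∈ G.E.filter (fun e => v ∈ e), G.θ e

/-- `τ = max_v d_v / μ_v`. -/
def tau : ℝ := ⨆ v, G.degree v / G.μ v

/-- `G` is homogeneous: `w_e(S) = 1` for every `S ∈ 2^e ∖ {∅, e}`. -/
def Homogeneous : Prop :=
  ∀ e ∈ G.E, ∀ S ⊆ e, S ≠ ∅ → S ≠ e → G.w e S = 1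

/-- `(λ, x)` is an eigenpair of the `p`-Laplacian `△_p` (for `p > 1` and for `p = 1`). -/
def IsEigenpair (p lam : ℝ) (x : Fin N → ℝ) : Prop :=
  x ≠ 0 ∧
  ∃ y : Finset (Fin N) → Fin N → ℝ,
    (∀ e ∈ G.E, y e ∈ basePolytope (G.w e) ∧
        ∀ z ∈ basePolytope (G.w e), dotp z x ≤ dotp (y e) x) ∧
    (if 1 < p then
        ∀ v, ∑ e ∈ G.E, G.θ e * G.fe e x ^ (p - 1) * y e v
              = lam * G.μ v * (|x v| ^ (p - 1) * sgn (x v))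
      else
        (∀ v, x v ≠ 0 → ∑ e ∈ G.E, G.θ e * y e v = lam * G.μ v * sgn (x v)) ∧
        (∀ v, x v = 0 → |∑ e ∈ G.E, G.θ e * y e v| ≤ lam * G.μ v))

/-- Vertices `u, v` are connected inside the induced sub-hypergraph `G[W]`
(the boundary volume in `G[W]` of `S ⊆ W` equals `Σ_{e ∈ E} θ_e w_e(S)`). -/
def VertConnectedIn (W : Finset (Fin N)) (u v : Fin N) : Prop :=
  u = v ∨ ∀ S ⊆ W, u ∈ S → v ∉ S → 0 < G.volB S

/-- `C` is (the vertex set of) a connected component of the induced sub-hypergraph `G[W]`. -/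
def IsComponent (W C : Finset (Fin N)) : Prop :=
  C ⊆ W ∧ C.Nonempty ∧
    (∀ u ∈ C, ∀ v ∈ C, G.VertConnectedIn W u v) ∧
    (∀ u ∈ C, ∀ v ∈ W, G.VertConnectedIn W u v → v ∈ C)

end SubmodularHypergraph

def posSupp {N : ℕ} (x : Fin N → ℝ) : Finset (Fin N) := Finset.univ.filter fun v => 0 < x v
def negSupp {N : ℕ} (x : Fin N → ℝ) : Finset (Fin N) := Finset.univ.filter fun v => x v < 0
def nonnegSupp {N : ℕ} (x : Fin N → ℝ) : Finset (Fin N) := Finset.univ.filter fun v => 0 ≤ x v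
def nonposSupp {N : ℕ} (x : Fin N → ℝ) : Finset (Fin N) := Finset.univ.filter fun v => x v ≤ 0

namespace SubmodularHypergraph

variable {N : ℕ} (G : SubmodularHypergraph N)

/-- The number of strong nodal domains of `x` (positive ones plus negative ones). -/
def strongNodalCount (x : Fin N → ℝ) : ℕ :=
  {C : Finset (Fin N) | G.IsComponent (posSupp x) C}.ncard +
  {C : Finset (Fin N) | G.IsComponent (negSupp x) C}.ncard

/-- The number of weak nodal domains of `x` (positive ones plus negative ones). -/
def weakNodalCount (x : Fin N → ℝ) : ℕ :=
  {C : Finset (Fin N) | G.IsComponent (nonnegSupp x) C}.ncard +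
  {C : Finset (Fin N) | G.IsComponent (nonposSupp x) C}.ncard

/-- The collection of strong nodal domains of `x`. -/
def strongNodalDomains (x : Fin N → ℝ) : Set (Finset (Fin N)) :=
  {C | G.IsComponent (posSupp x) C ∨ G.IsComponent (negSupp x) C}

/-- The collection of weak nodal domains of `x`. -/
def weakNodalDomains (x : Fin N → ℝ) : Set (Finset (Fin N)) :=
  {C | G.IsComponent (nonnegSupp x) C ∨ G.IsComponent (nonposSupp x) C}

/-- `Z_{p,μ}(x) = min_c ‖x − c·𝟙‖_{ℓp,μ}^p`. -/
def Z (p : ℝ) (x : Fin N → ℝ) : ℝ := ⨅ c : ℝ, ∑ v, G.μ v * |x v - c| ^ p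

/-- `𝓡_p(x) = Q_p(x) / Z_{p,μ}(x)`. -/
def Rq (p : ℝ) (x : Fin N → ℝ) : ℝ := G.Q p x / G.Z p x

/-- The `k`-way Cheeger constant `h_k`. -/
def cheegerConst (k : ℕ) : ℝ :=
  sInf {c : ℝ | ∃ S : Fin k → Finset (Fin N),
    (∀ i, (S i).Nonempty) ∧ (∀ i j, i ≠ j → Disjoint (S i) (S j)) ∧
    c = ⨆ i, G.conductance (S i)}

end SubmodularHypergraph

/-- There is an odd continuous map `h : A → ℝ^k ∖ {0}`. -/
def genusLE {N : ℕ} (A : Set (Fin N → ℝ)) (k : ℕ) : Prop :=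
  ∃ h : (Fin N → ℝ) → (Fin k → ℝ),
    ContinuousOn h A ∧ (∀ x ∈ A, h (-x) = -h x) ∧ ∀ x ∈ A, h x ≠ 0

/-- The Krasnoselski genus of a set. -/
def genus {N : ℕ} (A : Set (Fin N → ℝ)) : ℕ∞ :=
  sInf ((fun n : ℕ => (n : ℕ∞)) '' {n | genusLE A n})

namespace SubmodularHypergraph

variable {N : ℕ} (G : SubmodularHypergraph N)

/-- The `k`-th variational eigenvalue `λ_k^{(p)}` of `△_p`:
`min` over closed symmetric `A ⊆ S_{p,μ}` with `γ(A) ≥ k` of `max_{x ∈ A} Q_p(x)`. -/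
def varEigen (p : ℝ) (k : ℕ) : ℝ :=
  sInf ((fun A : Set (Fin N → ℝ) => sSup (G.Q p '' A)) ''
    {A | IsClosed A ∧ (∀ x ∈ A, -x ∈ A) ∧
         A ⊆ {x | G.normLpPow p x = 1} ∧ (k : ℕ∞) ≤ genus A})

end SubmodularHypergraph

open MeasureTheory Set

theorem continuous_mul_abs_sub_rpow {p : ℝ} (hp : 1 ≤ p) (γ : ℝ) :
    Continuous fun θ : ℝ => p * |θ - γ| ^ (p - 1) :=
  continuous_const.mul ((continuous_abs.comp (continuous_id.sub continuous_const)).rpow_const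
    fun _ => Or.inr (by linarith))

theorem integral_mul_abs_rpow_of_nonneg {p s : ℝ} (hp : 0 < p) (hs : 0 ≤ s) :
    ∫ t in (0 : ℝ)..s, p * |t| ^ (p - 1) = s ^ p := by
  have hcongr : EqOn (fun t : ℝ => p * |t| ^ (p - 1)) (fun t => p * t ^ (p - 1)) (uIcc 0 s) := by
    intro t ht
    rw [uIcc_of_le hs] at ht
    simp only [abs_of_nonneg ht.1]
  rw [intervalIntegral.integral_congr hcongr, intervalIntegral.integral_const_mul,
    integral_rpow (Or.inl (by linarith)), sub_add_cancel, Real.zero_rpow hp.ne']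
  field_simp
  ring

theorem integral_mul_abs_sub_rpow {p : ℝ} (hp : 0 < p) (γ y : ℝ) :
    ∫ θ in min γ y..max γ y, p * |θ - γ| ^ (p - 1) = |y - γ| ^ p := by
  rcases le_total γ y with h | h
  · rw [min_eq_left h, max_eq_right h, intervalIntegral.integral_comp_sub_right
      (fun t => p * |t| ^ (p - 1)), sub_self, abs_of_nonneg (sub_nonneg.2 h)]
    exact integral_mul_abs_rpow_of_nonneg hp (sub_nonneg.2 h)
  · simp_rw [min_eq_right h, max_eq_left h, abs_sub_comm _ γ]
    rw [intervalIntegral.integral_comp_sub_left (fun t => p * |t| ^ (p - 1)), sub_self,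
      abs_of_nonneg (sub_nonneg.2 h)]
    exact integral_mul_abs_rpow_of_nonneg hp (sub_nonneg.2 h)

theorem intervalIntegral_indicator_Ico {f : ℝ → ℝ} {a b m M : ℝ} (ham : a ≤ m) (hmM : m ≤ M)
    (hMb : M ≤ b) : ∫ θ in a..b, (Ico m M).indicator f θ = ∫ θ in m..M, f θ := by
  rw [intervalIntegral.integral_of_le (ham.trans (hmM.trans hMb)),
    intervalIntegral.integral_of_le hmM, integral_indicator measurableSet_Ico,
    Measure.restrict_restrict measurableSet_Ico]
  refine setIntegral_congr_set (Filter.EventuallyLE.antisymm ?_ ?_)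
  · exact (LE.le.eventuallyLE fun θ (hθ : θ ∈ Ico m M ∩ Ioc a b) =>
      Set.Ico_subset_Icc_self hθ.1).trans Ioc_ae_eq_Icc.symm.le
  · exact Ioo_ae_eq_Ioc.symm.le.trans (LE.le.eventuallyLE fun θ (hθ : θ ∈ Ioo m M) =>
      ⟨Set.Ioo_subset_Ico_self hθ, ham.trans_lt hθ.1, hθ.2.le.trans hMb⟩)

theorem sum_mul_mul_rpow_le {ι : Type*} (s : Finset ι) {w u m : ι → ℝ} {p : ℝ} (hp : 1 ≤ p)
    (hw : ∀ i ∈ s, 0 ≤ w i) (hu : ∀ i ∈ s, 0 ≤ u i) (hm : ∀ i ∈ s, 0 ≤ m i) :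
    ∑ i ∈ s, w i * (u i * m i ^ (p - 1)) ≤
      (∑ i ∈ s, w i * u i ^ p) ^ (1 / p) * (∑ i ∈ s, w i * m i ^ p) ^ ((p - 1) / p) := by
  obtain rfl | hp := hp.eq_or_lt
  · simp
  set q := Real.conjExponent p
  have hpq : p.HolderConjugate q := .conjExponent hp
  have hq : 1 / q = (p - 1) / p := by simp only [q, Real.conjExponent, one_div_div]
  calc ∑ i ∈ s, w i * (u i * m i ^ (p - 1))
      = ∑ i ∈ s, (w i ^ (1 / p) * u i) * (w i ^ (1 / q) * m i ^ (p - 1)) := by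
        refine sum_congr rfl fun i hi => ?_
        rw [mul_mul_mul_comm, ← Real.rpow_add' (hw i hi) (by simp [hpq.inv_add_inv_eq_one]),
          one_div, one_div, hpq.inv_add_inv_eq_one, Real.rpow_one]
    _ ≤ (∑ i ∈ s, (w i ^ (1 / p) * u i) ^ p) ^ (1 / p) *
          (∑ i ∈ s, (w i ^ (1 / q) * m i ^ (p - 1)) ^ q) ^ (1 / q) :=
        Real.inner_le_Lp_mul_Lq_of_nonneg s hpq
          (fun i hi => by have := hw i hi; have := hu i hi; positivity)
          (fun i hi => by have := hw i hi; have := hm i hi; positivity)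
    _ = (∑ i ∈ s, w i * u i ^ p) ^ (1 / p) * (∑ i ∈ s, w i * m i ^ p) ^ ((p - 1) / p) := by
        rw [← hq]
        congr 2 <;> refine sum_congr rfl fun i hi => ?_
        · rw [Real.mul_rpow (by have := hw i hi; positivity) (hu i hi), ← Real.rpow_mul (hw i hi),
            one_div_mul_cancel hpq.ne_zero, Real.rpow_one]
        · rw [Real.mul_rpow (by have := hw i hi; positivity) (by have := hm i hi; positivity),
            ← Real.rpow_mul (hw i hi), one_div_mul_cancel hpq.symm.ne_zero, Real.rpow_one,
            ← Real.rpow_mul (hm i hi), hpq.sub_one_mul_conj]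

theorem le_mul_rpow_mul_div_rpow_of_mul_le {p τ Q Z S c : ℝ} (hp : 1 ≤ p) (hτ : 0 ≤ τ)
    (hQ : 0 ≤ Q) (hZ : 0 < Z) (hZS : Z ≤ S)
    (h : c * S ≤ p * (Q ^ (1 / p) * (τ * S) ^ ((p - 1) / p))) :
    c ≤ p * τ ^ ((p - 1) / p) * (Q / Z) ^ (1 / p) := by
  have hS : 0 < S := hZ.trans_le hZS
  have hSsplit : S ^ ((p - 1) / p) * S ^ (1 / p) = S := by
    rw [← Real.rpow_add hS, ← add_div, sub_add_cancel, div_self (by linarith), Real.rpow_one]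
  have hQS : (Q / S) ^ (1 / p) * S = Q ^ (1 / p) * S ^ ((p - 1) / p) := by
    rw [Real.div_rpow hQ hS.le, div_mul_eq_mul_div, div_eq_iff (by positivity), mul_assoc, hSsplit]
  have hcS : c * S ≤ p * τ ^ ((p - 1) / p) * (Q / S) ^ (1 / p) * S := by
    calc c * S ≤ _ := h
      _ = _ := by rw [mul_assoc _ _ S, hQS, Real.mul_rpow hτ hS.le]; ring
  calc c ≤ p * τ ^ ((p - 1) / p) * (Q / S) ^ (1 / p) := le_of_mul_le_mul_right hcS hS
    _ ≤ p * τ ^ ((p - 1) / p) * (Q / Z) ^ (1 / p) := by gcongr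

theorem exists_weighted_median {ι : Type*} [Fintype ι] [Nonempty ι] (x μ : ι → ℝ)
    (hμ : ∀ v, 0 ≤ μ v) :
    ∃ u, 2 * ∑ v with x v < x u, μ v ≤ ∑ v, μ v ∧ 2 * ∑ v with x u < x v, μ v ≤ ∑ v, μ v := by
  have hsplit (u : ι) : ∑ v with x v ≤ x u, μ v + ∑ v with x u < x v, μ v = ∑ v, μ v := by
    simpa only [not_le] using sum_filter_add_sum_filter_not univ (fun v => x v ≤ x u) μ
  set low := univ.filter fun u => 2 * ∑ v with x v < x u, μ v ≤ ∑ v, μ v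
  obtain ⟨u₀, hu₀⟩ := Finite.exists_min x
  have hlow : low.Nonempty := ⟨u₀, mem_filter.2 ⟨mem_univ _, by
    simpa [filter_false_of_mem fun v _ => not_lt.2 (hu₀ v)] using sum_nonneg fun v _ => hμ v⟩⟩
  obtain ⟨u, hu, humax⟩ := low.exists_max_image x hlow
  refine ⟨u, (mem_filter.1 hu).2, ?_⟩
  by_contra! hbig
  have hne : (univ.filter fun v => x u < x v).Nonempty := by
    by_contra! h
    simp only [h, sum_empty, mul_zero] at hbig
    exact hbig.not_ge (sum_nonneg fun v _ => hμ v)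
  obtain ⟨u', hu', hu'min⟩ := (univ.filter fun v => x u < x v).exists_min_image x hne
  have hu'u : x u < x u' := (mem_filter.1 hu').2
  have hlevel : (univ.filter fun v => x v < x u') = univ.filter fun v => x v ≤ x u :=
    filter_congr fun v _ => ⟨fun h => not_lt.1 fun h' => h.not_ge (hu'min v (mem_filter.2
      ⟨mem_univ _, h'⟩)), fun h => h.trans_lt hu'u⟩
  have : u' ∈ low := mem_filter.2 ⟨mem_univ _, by rw [hlevel]; linarith [hsplit u]⟩
  exact (humax u' this).not_gt hu'u

section Superlevel

variable {ι : Type*} [Fintype ι]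

/-- The paper's `Θ(x, θ)`. -/
def superlevel (x : ι → ℝ) (θ : ℝ) : Finset ι := univ.filter fun v => θ < x v

def sideAvoiding [DecidableEq ι] (u : ι) (S : Finset ι) : Finset ι :=
  if u ∈ S then Sᶜ else S

theorem mem_sideAvoiding_superlevel_iff [DecidableEq ι] (x : ι → ℝ) (u v : ι) (θ : ℝ) :
    v ∈ sideAvoiding u (superlevel x θ) ↔ θ ∈ Ico (min (x u) (x v)) (max (x u) (x v)) := by
  simp only [sideAvoiding, superlevel, Set.mem_Ico, min_le_iff, lt_max_iff]
  split_ifs <;> simp <;> grind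

theorem superlevel_nonempty [Nonempty ι] {x : ι → ℝ} {θ : ℝ} (h : θ < ⨆ v, x v) :
    (superlevel x θ).Nonempty := by
  obtain ⟨v, hv⟩ := exists_eq_ciSup_of_finite (f := x)
  exact ⟨v, by simpa [superlevel, hv] using h⟩

theorem compl_superlevel_nonempty [DecidableEq ι] [Nonempty ι] {x : ι → ℝ} {θ : ℝ}
    (h : ⨅ v, x v ≤ θ) : (superlevel x θ)ᶜ.Nonempty := by
  obtain ⟨v, hv⟩ := exists_eq_ciInf_of_finite (f := x)
  exact ⟨v, by simpa [superlevel, hv] using h⟩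

theorem measurable_comp_superlevel {β : Type*} [MeasurableSpace β] (F : Finset ι → β)
    (x : ι → ℝ) : Measurable fun θ => F (superlevel x θ) := by
  let _ : MeasurableSpace (Finset ι) := ⊤
  refine (measurable_from_top (f := F)).comp (measurable_to_countable' fun S => ?_)
  have : superlevel x ⁻¹' {S} = ⋂ v, {t | t < x v ↔ v ∈ S} := by
    ext t; simp [superlevel, Finset.ext_iff]
  rw [this]
  exact .iInter fun v => (measurableSet_lt measurable_id measurable_const).iff (.const (v ∈ S))

theorem intervalIntegrable_comp_superlevel_mul (F : Finset ι → ℝ) (x : ι → ℝ) {g : ℝ → ℝ}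
    (hg : Continuous g) (a b : ℝ) :
    IntervalIntegrable (fun θ => F (superlevel x θ) * g θ) volume a b := by
  obtain ⟨C, hC⟩ := (Set.finite_range fun S => ‖F S‖).bddAbove
  exact intervalIntegrable_iff.2 <| (intervalIntegrable_iff.1 (hg.intervalIntegrable a b)).bdd_mul
    (measurable_comp_superlevel F x).aestronglyMeasurable (ae_of_all _ fun θ => hC ⟨_, rfl⟩)

end Superlevel

namespace SubmodularHypergraph

variable {N : ℕ} (G : SubmodularHypergraph N)

theorem vol_nonneg (S : Finset (Fin N)) : 0 ≤ G.vol S :=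
  sum_nonneg fun v _ => (G.μ_pos v).le

theorem vol_pos {S : Finset (Fin N)} (hS : S.Nonempty) : 0 < G.vol S :=
  sum_pos (fun v _ => G.μ_pos v) hS

theorem vol_add_vol_compl (S : Finset (Fin N)) : G.vol S + G.vol Sᶜ = ∑ v, G.μ v :=
  sum_add_sum_compl S G.μ

theorem vol_eq_sum_ite (S : Finset (Fin N)) : G.vol S = ∑ v, if v ∈ S then G.μ v else 0 := by
  rw [sum_ite_mem, Finset.univ_inter, vol]

theorem volB_nonneg (S : Finset (Fin N)) : 0 ≤ G.volB S :=
  sum_nonneg fun e he => mul_nonneg (G.θ_pos e he).le (G.w_nonneg e he S)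

theorem conductance_nonneg (S : Finset (Fin N)) : 0 ≤ G.conductance S :=
  div_nonneg (G.volB_nonneg S) (le_min (G.vol_nonneg S) (G.vol_nonneg Sᶜ))

theorem conductance_mul_min_vol {S : Finset (Fin N)} (hS : S.Nonempty) (hSc : Sᶜ.Nonempty) :
    G.conductance S * min (G.vol S) (G.vol Sᶜ) = G.volB S :=
  div_mul_cancel₀ _ (lt_min (G.vol_pos hS) (G.vol_pos hSc)).ne'

theorem exists_mem_and_exists_not_mem_of_w_ne_zero {e S : Finset (Fin N)} (he : e ∈ G.E)
    (h : G.w e S ≠ 0) : (∃ u ∈ e, u ∈ S) ∧ ∃ u ∈ e, u ∉ S := by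
  constructor
  · by_contra! hdisj
    rw [G.w_inter e he, (Finset.disjoint_iff_inter_eq_empty.1 (Finset.disjoint_left.2
      fun u hS he => hdisj u he hS)), G.w_empty e he] at h
    exact h rfl
  · by_contra! hsub
    rw [G.w_inter e he, Finset.inter_eq_right.2 hsub, G.w_symm e he e subset_rfl,
      Finset.sdiff_self, G.w_empty e he] at h
    exact h rfl

theorem fe_nonneg [Nonempty (Fin N)] {e : Finset (Fin N)} (he : e ∈ G.E) (x : Fin N → ℝ) :
    0 ≤ G.fe e x :=
  intervalIntegral.integral_nonneg
    (ciInf_le_ciSup (Set.finite_range x).bddBelow (Set.finite_range x).bddAbove)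
    fun _ _ => G.w_nonneg e he _

theorem Q_nonneg [Nonempty (Fin N)] {p : ℝ} (x : Fin N → ℝ) : 0 ≤ G.Q p x :=
  sum_nonneg fun e he => mul_nonneg (G.θ_pos e he).le (Real.rpow_nonneg (G.fe_nonneg he x) p)

theorem sum_θ_mul_sum_eq_sum_degree_mul (f : Fin N → ℝ) :
    ∑ e ∈ G.E, G.θ e * ∑ v ∈ e, f v = ∑ v, G.degree v * f v := by
  simp_rw [mul_sum, degree, sum_mul]
  exact sum_comm' fun e v => by simp [and_comm]

theorem degree_le_tau_mul (v : Fin N) : G.degree v ≤ G.tau * G.μ v :=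
  (div_le_iff₀ (G.μ_pos v)).1 <|
    le_ciSup (f := fun v => G.degree v / G.μ v) (Set.finite_range _).bddAbove v

theorem tau_nonneg [Nonempty (Fin N)] : 0 ≤ G.tau := by
  obtain ⟨v⟩ := ‹Nonempty (Fin N)›
  refine le_ciSup_of_le (Set.finite_range _).bddAbove v (div_nonneg ?_ (G.μ_pos v).le)
  exact sum_nonneg fun e he => (G.θ_pos e (mem_filter.1 he).1).le

theorem sum_θ_mul_sum_le_tau_mul {f : Fin N → ℝ} (hf : ∀ v, 0 ≤ f v) :
    ∑ e ∈ G.E, G.θ e * ∑ v ∈ e, f v ≤ G.tau * ∑ v, G.μ v * f v := by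
  rw [G.sum_θ_mul_sum_eq_sum_degree_mul, mul_sum]
  exact sum_le_sum fun v _ => by
    rw [← mul_assoc]; exact mul_le_mul_of_nonneg_right (G.degree_le_tau_mul v) (hf v)

theorem Z_le (p : ℝ) (x : Fin N → ℝ) (c : ℝ) : G.Z p x ≤ ∑ v, G.μ v * |x v - c| ^ p :=
  ciInf_le ⟨0, by
    rintro _ ⟨c, rfl⟩
    exact sum_nonneg fun v _ => mul_nonneg (G.μ_pos v).le (by positivity)⟩ c

theorem Z_pos {p : ℝ} (hp : 0 < p) {x : Fin N → ℝ} (hx : Nonconstant x) : 0 < G.Z p x := by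
  obtain ⟨u, v, huv⟩ := hx
  set δ := |x u - x v| / 2
  have hδ : 0 < δ := by have := sub_ne_zero.2 huv; positivity
  refine (mul_pos (lt_min (G.μ_pos u) (G.μ_pos v)) (Real.rpow_pos_of_pos hδ p)).trans_le
    (le_ciInf fun c => ?_)
  obtain ⟨w, hw, hδw⟩ : ∃ w ∈ ({u, v} : Finset (Fin N)), δ ≤ |x w - c| := by
    by_contra! h
    have := abs_sub_le (x u) c (x v)
    rw [abs_sub_comm c] at this
    linarith [h u (by simp), h v (by simp), show δ = |x u - x v| / 2 from rfl]
  calc min (G.μ u) (G.μ v) * δ ^ p ≤ G.μ w * |x w - c| ^ p := by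
        gcongr
        · exact (G.μ_pos w).le
        · rcases mem_insert.1 hw with rfl | hw
          · exact min_le_left _ _
          · rw [mem_singleton.1 hw]; exact min_le_right _ _
    _ ≤ ∑ v, G.μ v * |x v - c| ^ p :=
        single_le_sum (f := fun v => G.μ v * |x v - c| ^ p)
          (fun v _ => mul_nonneg (G.μ_pos v).le (Real.rpow_nonneg (abs_nonneg _) p)) (mem_univ w)

theorem integral_vol_sideAvoiding_mul_eq {p : ℝ} (hp : 1 ≤ p) (x : Fin N → ℝ) (u : Fin N) :
    ∫ θ in (⨅ v, x v)..(⨆ v, x v),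
        G.vol (sideAvoiding u (superlevel x θ)) * (p * |θ - x u| ^ (p - 1)) =
      ∑ v, G.μ v * |x v - x u| ^ p := by
  set g := fun θ : ℝ => p * |θ - x u| ^ (p - 1)
  have hsum (θ : ℝ) : G.vol (sideAvoiding u (superlevel x θ)) * g θ =
      ∑ v, G.μ v * (Ico (min (x u) (x v)) (max (x u) (x v))).indicator g θ := by
    rw [vol_eq_sum_ite, sum_mul]
    refine sum_congr rfl fun v _ => ?_
    simp only [mem_sideAvoiding_superlevel_iff, Set.indicator]
    split_ifs <;> ring
  have hbelow (v : Fin N) : ⨅ v, x v ≤ x v := ciInf_le (Set.finite_range x).bddBelow v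
  have habove (v : Fin N) : x v ≤ ⨆ v, x v := le_ciSup (Set.finite_range x).bddAbove v
  have hg := intervalIntegrable_iff.1 ((continuous_mul_abs_sub_rpow hp (x u)).intervalIntegrable
    (μ := volume) (⨅ v, x v) (⨆ v, x v))
  rw [intervalIntegral.integral_congr fun θ _ => hsum θ, intervalIntegral.integral_finsetSum
    fun v _ => (intervalIntegrable_iff.2 (hg.indicator measurableSet_Ico)).const_mul _]
  refine sum_congr rfl fun v _ => ?_
  rw [intervalIntegral.integral_const_mul, intervalIntegral_indicator_Ico
    (le_min (hbelow u) (hbelow v)) min_le_max (max_le (habove u) (habove v)),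
    integral_mul_abs_sub_rpow (by linarith)]

theorem vol_sideAvoiding_le_min {x : Fin N → ℝ} {u : Fin N}
    (hlow : 2 * ∑ v with x v < x u, G.μ v ≤ ∑ v, G.μ v)
    (hhigh : 2 * ∑ v with x u < x v, G.μ v ≤ ∑ v, G.μ v) (θ : ℝ) :
    G.vol (sideAvoiding u (superlevel x θ)) ≤
      min (G.vol (superlevel x θ)) (G.vol (superlevel x θ)ᶜ) := by
  have hsplit := G.vol_add_vol_compl (superlevel x θ)
  have hmono {S T : Finset (Fin N)} (h : S ⊆ T) : G.vol S ≤ ∑ v ∈ T, G.μ v :=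
    sum_le_sum_of_subset_of_nonneg h fun v _ _ => (G.μ_pos v).le
  unfold sideAvoiding
  split_ifs with hu <;> simp only [superlevel, mem_filter, Finset.mem_univ, true_and] at hu
  · have : G.vol (superlevel x θ)ᶜ ≤ ∑ v with x v < x u, G.μ v := hmono fun v hv => by
      simp only [superlevel, Finset.mem_compl, mem_filter, Finset.mem_univ, true_and,
        not_lt] at hv
      simpa using hv.trans_lt hu
    exact le_min (by linarith) le_rfl
  · have : G.vol (superlevel x θ) ≤ ∑ v with x u < x v, G.μ v := hmono fun v hv => by
      simp only [superlevel, mem_filter, Finset.mem_univ, true_and] at hv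
      simpa using (not_lt.1 hu).trans_lt hv
    exact le_min le_rfl (by linarith)

theorem mul_sum_le_integral_volB_superlevel {p : ℝ} (hp : 1 ≤ p) {x : Fin N → ℝ} {u : Fin N}
    (hlow : 2 * ∑ v with x v < x u, G.μ v ≤ ∑ v, G.μ v)
    (hhigh : 2 * ∑ v with x u < x v, G.μ v ≤ ∑ v, G.μ v) {c : ℝ}
    (hc : ∀ θ ∈ Ioo (⨅ v, x v) (⨆ v, x v), c ≤ G.conductance (superlevel x θ)) :
    c * ∑ v, G.μ v * |x v - x u| ^ p ≤ ∫ θ in (⨅ v, x v)..(⨆ v, x v),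
      G.volB (superlevel x θ) * (p * |θ - x u| ^ (p - 1)) := by
  have : Nonempty (Fin N) := ⟨u⟩
  have hg := continuous_mul_abs_sub_rpow hp (x u)
  rw [← G.integral_vol_sideAvoiding_mul_eq hp x u, ← intervalIntegral.integral_const_mul]
  refine intervalIntegral.integral_mono_on_of_le_Ioo
    (ciInf_le_ciSup (Set.finite_range x).bddBelow (Set.finite_range x).bddAbove)
    ((intervalIntegrable_comp_superlevel_mul (fun S => G.vol (sideAvoiding u S)) x hg _ _).const_mul
      c)
    (intervalIntegrable_comp_superlevel_mul G.volB x hg _ _) fun θ hθ => ?_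
  have hg0 : 0 ≤ p * |θ - x u| ^ (p - 1) := by positivity
  calc c * (G.vol (sideAvoiding u (superlevel x θ)) * (p * |θ - x u| ^ (p - 1)))
      ≤ G.conductance (superlevel x θ) *
          min (G.vol (superlevel x θ)) (G.vol (superlevel x θ)ᶜ) * (p * |θ - x u| ^ (p - 1)) := by
        rw [← mul_assoc]
        exact mul_le_mul_of_nonneg_right (mul_le_mul (hc θ hθ)
          (G.vol_sideAvoiding_le_min hlow hhigh θ) (G.vol_nonneg _) (G.conductance_nonneg _)) hg0
    _ = G.volB (superlevel x θ) * (p * |θ - x u| ^ (p - 1)) := by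
        rw [G.conductance_mul_min_vol (superlevel_nonempty hθ.2)
          (compl_superlevel_nonempty hθ.1.le)]

theorem w_superlevel_mul_le {p : ℝ} (hp : 1 ≤ p) {e : Finset (Fin N)} (he : e ∈ G.E)
    {x : Fin N → ℝ} {γ M : ℝ} (hM : ∀ v ∈ e, |x v - γ| ≤ M) (θ : ℝ) :
    G.w e (superlevel x θ) * (p * |θ - γ| ^ (p - 1)) ≤
      G.w e (superlevel x θ) * (p * M ^ (p - 1)) := by
  rcases eq_or_ne (G.w e (superlevel x θ)) 0 with h | h
  · simp [h]
  obtain ⟨⟨u, hue, hu⟩, ⟨u', hu'e, hu'⟩⟩ := G.exists_mem_and_exists_not_mem_of_w_ne_zero he h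
  simp only [superlevel, mem_filter, Finset.mem_univ, true_and, not_lt] at hu hu'
  have hθ : |θ - γ| ≤ M := abs_sub_le_iff.2
    ⟨by linarith [le_abs_self (x u - γ), hM u hue], by linarith [neg_abs_le (x u' - γ), hM u' hu'e]⟩
  have := G.w_nonneg e he (superlevel x θ)
  gcongr

theorem integral_volB_superlevel_le {p : ℝ} (hp : 1 ≤ p) [Nonempty (Fin N)] (x : Fin N → ℝ)
    (γ : ℝ) {m : Finset (Fin N) → ℝ} (hm : ∀ e ∈ G.E, ∀ v ∈ e, |x v - γ| ≤ m e) :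
    ∫ θ in (⨅ v, x v)..(⨆ v, x v), G.volB (superlevel x θ) * (p * |θ - γ| ^ (p - 1)) ≤
      p * ∑ e ∈ G.E, G.θ e * (G.fe e x * m e ^ (p - 1)) := by
  have hg := continuous_mul_abs_sub_rpow hp γ
  have hab := ciInf_le_ciSup (Set.finite_range x).bddBelow (Set.finite_range x).bddAbove
  simp_rw [volB, sum_mul, mul_assoc]
  rw [intervalIntegral.integral_finsetSum fun e _ =>
    (intervalIntegrable_comp_superlevel_mul (G.w e) x hg _ _).const_mul _, mul_sum]
  refine sum_le_sum fun e he => ?_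
  have hfe : ∫ θ in (⨅ v, x v)..(⨆ v, x v), G.w e (superlevel x θ) = G.fe e x := rfl
  calc ∫ θ in (⨅ v, x v)..(⨆ v, x v), G.θ e * (G.w e (superlevel x θ) * (p * |θ - γ| ^ (p - 1)))
      = G.θ e * ∫ θ in (⨅ v, x v)..(⨆ v, x v), G.w e (superlevel x θ) * (p * |θ - γ| ^ (p - 1)) :=
        intervalIntegral.integral_const_mul _ _
    _ ≤ G.θ e * ∫ θ in (⨅ v, x v)..(⨆ v, x v), G.w e (superlevel x θ) * (p * m e ^ (p - 1)) := by
        refine mul_le_mul_of_nonneg_left ?_ (G.θ_pos e he).le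
        exact intervalIntegral.integral_mono_on hab
          (intervalIntegrable_comp_superlevel_mul (G.w e) x hg _ _)
          (intervalIntegrable_comp_superlevel_mul (G.w e) x continuous_const _ _)
          fun θ _ => G.w_superlevel_mul_le hp he (hm e he) θ
    _ = p * (G.θ e * (G.fe e x * m e ^ (p - 1))) := by
        rw [intervalIntegral.integral_mul_const, hfe]
        ring

theorem le_of_forall_le_conductance_superlevel {p : ℝ} (hp : 1 ≤ p) {x : Fin N → ℝ}
    (hx : Nonconstant x) {c : ℝ}
    (hc : ∀ θ ∈ Ioo (⨅ v, x v) (⨆ v, x v), c ≤ G.conductance (superlevel x θ)) :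
    c ≤ p * G.tau ^ ((p - 1) / p) * G.Rq p x ^ (1 / p) := by
  have : Nonempty (Fin N) := let ⟨v, _⟩ := hx; ⟨v⟩
  obtain ⟨u, hlow, hhigh⟩ := exists_weighted_median x G.μ fun v => (G.μ_pos v).le
  set m : Finset (Fin N) → ℝ := fun e => (∑ v ∈ e, |x v - x u| ^ p) ^ (1 / p)
  have hm_nonneg (e : Finset (Fin N)) : 0 ≤ ∑ v ∈ e, |x v - x u| ^ p := by positivity
  have hmp (e : Finset (Fin N)) : m e ^ p = ∑ v ∈ e, |x v - x u| ^ p := by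
    rw [← Real.rpow_mul (hm_nonneg e), one_div_mul_cancel (by linarith), Real.rpow_one]
  have hm (e : Finset (Fin N)) (v : Fin N) (hv : v ∈ e) : |x v - x u| ≤ m e := by
    rw [← Real.rpow_le_rpow_iff (abs_nonneg _) (by positivity) (by linarith : (0:ℝ) < p), hmp]
    exact single_le_sum (f := fun v => |x v - x u| ^ p) (fun v _ => by positivity) hv
  refine le_mul_rpow_mul_div_rpow_of_mul_le hp G.tau_nonneg (G.Q_nonneg x)
    (G.Z_pos (by linarith) hx) (G.Z_le p x (x u)) ?_
  calc c * ∑ v, G.μ v * |x v - x u| ^ p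
      ≤ ∫ θ in (⨅ v, x v)..(⨆ v, x v), G.volB (superlevel x θ) * (p * |θ - x u| ^ (p - 1)) :=
        G.mul_sum_le_integral_volB_superlevel hp hlow hhigh hc
    _ ≤ p * ∑ e ∈ G.E, G.θ e * (G.fe e x * m e ^ (p - 1)) :=
        G.integral_volB_superlevel_le hp x (x u) fun e _ => hm e
    _ ≤ p * (G.Q p x ^ (1 / p) * (∑ e ∈ G.E, G.θ e * m e ^ p) ^ ((p - 1) / p)) := by
        gcongr
        exact sum_mul_mul_rpow_le G.E hp (fun e he => (G.θ_pos e he).le)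
          (fun e he => G.fe_nonneg he x) (fun e _ => by positivity)
    _ ≤ p * (G.Q p x ^ (1 / p) * (G.tau * ∑ v, G.μ v * |x v - x u| ^ p) ^ ((p - 1) / p)) := by
        simp_rw [hmp]
        gcongr
        · exact Real.rpow_nonneg (G.Q_nonneg x) _
        · exact sum_nonneg fun e he => mul_nonneg (G.θ_pos e he).le (hm_nonneg e)
        · exact G.sum_θ_mul_sum_le_tau_mul fun v => Real.rpow_nonneg (abs_nonneg (x v - x u)) p

end SubmodularHypergraph

theorem stmt16_general {N : ℕ} (G : SubmodularHypergraph N) (p : ℝ) (hp : 1 ≤ p)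
    (x : Fin N → ℝ) (hnc : Nonconstant x) :
    sInf {c : ℝ | ∃ θ : ℝ, (⨅ v, x v) ≤ θ ∧ θ < (⨆ v, x v) ∧
        c = G.conductance (Finset.univ.filter fun v => θ < x v)}
      ≤ p * G.tau ^ ((p - 1) / p) * G.Rq p x ^ (1 / p) := by
  refine G.le_of_forall_le_conductance_superlevel hp hnc fun θ hθ =>
    csInf_le ?_ ⟨θ, hθ.1.le, hθ.2, rfl⟩
  exact ⟨0, by rintro _ ⟨θ, -, -, rfl⟩; exact G.conductance_nonneg _⟩

/-- rounding / thresholding bound. If the nonconstant vector `x`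
satisfies `‖x‖_{ℓp,μ}^p = Z_{p,μ}(x)` (i.e. `c = 0` minimizes `c ↦ ‖x − c𝟙‖_{ℓp,μ}^p`),
then the optimal thresholding conductance
`c(x) = inf_{θ ∈ [min x, max x)} c(Θ(x,θ))` satisfies
`c(x) ≤ p τ^{(p−1)/p} 𝓡_p(x)^{1/p}`. -/
theorem stmt16 {N : ℕ} (G : SubmodularHypergraph N) (p : ℝ) (hp : 1 ≤ p)
    (x : Fin N → ℝ) (hnc : Nonconstant x)
    (hZ : G.normLpPow p x = G.Z p x) :
    sInf {c : ℝ | ∃ θ : ℝ, (⨅ v, x v) ≤ θ ∧ θ < (⨆ v, x v) ∧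
        c = G.conductance (Finset.univ.filter fun v => θ < x v)}
      ≤ p * G.tau ^ ((p - 1) / p) * G.Rq p x ^ (1 / p) :=
  stmt16_general G p hp x hnc
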